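/- arXiv:1001.4319 — 2 statements merged into one kernel-verified Lean document; each statement's English description precedes it below -/
import Mathlib

section
/- Let α = (α₁, α₂, α₃, α₄) ∈ ℂ⁴ belong to the class 𝒜. If αⱼ′ ≠ 0 for some j′ ∈ {1,2,3,4}, then αⱼ·αⱼ′⁻¹ ∈ ℝ for every j ∈ {1,2,3,4}. -/
/-!
Call `z, w ∈ ℂ` parallel when `z * conj w` is real. With `x = α₁ conj α₄` and `y = α₃ conj α₂`,
(𝒜1) says `x - y = 1` and `x * conj y = (α₁ conj α₃)(α₂ conj α₄)` is real by (𝒜2), which forces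
`x, y ∈ ℝ`. Hence `α₁ ∥ α₃ ∥ α₂ ∥ α₄ ∥ α₁`. Parallelism is transitive through a nonzero number,
and (𝒜1) rules out `α₃ = α₄ = 0` and `α₁ = α₂ = 0`, so all the `αⱼ` are pairwise parallel.
Finally `z * w⁻¹ = z * conj w / |w|²`.
-/

open ComplexConjugate

/-- The vector `(α 0, α 1, α 2, α 3)` belongs to the class 𝒜 of the paper:
(𝒜1) `α₁ conj α₄ - conj α₂ α₃ = 1`, (𝒜2) `α₁ conj α₃, α₂ conj α₄ ∈ ℝ`. -/
def ClassA (α : Fin 4 → ℂ) : Prop :=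
  α 0 * conj (α 3) - conj (α 1) * α 2 = 1 ∧
  (α 0 * conj (α 2)).im = 0 ∧ (α 1 * conj (α 3)).im = 0

namespace Complex

lemma im_mul_conj_self (z : ℂ) : (z * conj z).im = 0 := by
  simp [mul_conj]

lemma im_mul_conj_symm {z w : ℂ} (h : (z * conj w).im = 0) : (w * conj z).im = 0 := by
  rw [← neg_eq_zero, ← conj_im, map_mul, conj_conj, mul_comm, h]

lemma im_mul_conj_trans {z w u : ℂ} (hw : w ≠ 0) (hzw : (z * conj w).im = 0)
    (hwu : (w * conj u).im = 0) : (z * conj u).im = 0 := by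
  have key : z * conj u * (normSq w : ℂ) = z * conj w * (w * conj u) := by
    rw [← mul_conj]; ring
  have h := congrArg im key
  rw [im_mul_ofReal, mul_im (z * conj w), hzw, hwu] at h
  simpa [normSq_eq_zero.not.mpr hw] using h

lemma im_mul_inv_eq_zero {z w : ℂ} (h : (z * conj w).im = 0) : (z * w⁻¹).im = 0 := by
  rw [inv_def, ← mul_assoc, im_mul_ofReal, h, zero_mul]

lemma im_eq_zero_of_sub_eq_one {x y : ℂ} (hxy : x - y = 1) (h : (x * conj y).im = 0) :
    y.im = 0 := by
  rw [sub_eq_iff_eq_add'] at hxy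
  subst hxy
  simp only [mul_im, add_re, add_im, conj_re, conj_im, one_re, one_im] at h
  linarith

end Complex

open Complex

namespace ClassA

variable {α : Fin 4 → ℂ}

lemma im_mul_conj_eq_zero_cross (hA : ClassA α) :
    (α 0 * conj (α 3)).im = 0 ∧ (α 2 * conj (α 1)).im = 0 := by
  obtain ⟨h1, h02, h13⟩ := hA
  rw [mul_comm (conj _)] at h1
  have hprod : (α 0 * conj (α 3) * conj (α 2 * conj (α 1))).im = 0 := by
    rw [show α 0 * conj (α 3) * conj (α 2 * conj (α 1))
        = α 0 * conj (α 2) * (α 1 * conj (α 3)) by simp only [map_mul, conj_conj]; ring,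
      mul_im, h02, h13]
    ring
  have hy := im_eq_zero_of_sub_eq_one h1 hprod
  refine ⟨?_, hy⟩
  rw [sub_eq_iff_eq_add'] at h1
  simp [h1, hy]

lemma im_mul_conj_eq_zero (hA : ClassA α) (j k : Fin 4) : (α j * conj (α k)).im = 0 := by
  have h02 := hA.2.1
  have h13 := hA.2.2
  obtain ⟨h03, h21⟩ := hA.im_mul_conj_eq_zero_cross
  have h01 : (α 0 * conj (α 1)).im = 0 := by
    by_cases h2 : α 2 = 0
    · have h3 : α 3 ≠ 0 := fun h3 => by simpa [h2, h3] using hA.1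
      exact im_mul_conj_trans h3 h03 (im_mul_conj_symm h13)
    · exact im_mul_conj_trans h2 h02 h21
  have h23 : (α 2 * conj (α 3)).im = 0 := by
    by_cases h0 : α 0 = 0
    · have h1 : α 1 ≠ 0 := fun h1 => by simpa [h0, h1] using hA.1
      exact im_mul_conj_trans h1 h21 h13
    · exact im_mul_conj_trans h0 (im_mul_conj_symm h02) h03
  fin_cases j <;> fin_cases k <;>
    first
      | exact im_mul_conj_self _
      | assumption
      | exact im_mul_conj_symm ‹_›

end ClassA

theorem stmt3_general (α : Fin 4 → ℂ) (hA : ClassA α) (j' : Fin 4) :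
    ∀ j : Fin 4, (α j * (α j')⁻¹).im = 0 :=
  fun j => im_mul_inv_eq_zero (hA.im_mul_conj_eq_zero j j')

/-- If `α ∈ 𝒜` and `α_{j'} ≠ 0`, then `αⱼ αⱼ'⁻¹ ∈ ℝ` for all `j`. -/
theorem stmt3 (α : Fin 4 → ℂ) (hA : ClassA α) (j' : Fin 4) (hj' : α j' ≠ 0) :
    ∀ j : Fin 4, (α j * (α j')⁻¹).im = 0 :=
  stmt3_general α hA j'
end

section
/- Fix Λ > 0 and let Ω_Λ := (−∞,−Λ) ∪ (Λ,∞). Let ψ : ℝ → ℂ be twice differentiable at every point of Ω_Λ, square integrable on Ω_Λ, and satisfy −ψ″(x) = i·ψ(x) for all x ∈ Ω_Λ. Then there exist complex numbers c_L, c_R such that ψ(x) = c_L·L₊(x) + c_R·R₊(x) for all x ∈ Ω_Λ. Similarly, if instead −ψ″(x) = −i·ψ(x) for all x ∈ Ω_Λ, then there exist c_L, c_R ∈ ℂ with ψ(x) = c_L·L₋(x) + c_R·R₋(x) for all x ∈ Ω_Λ. -/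
open ComplexConjugate Real

/-- The normalization factor `N = 2^{1/4} e^{Λ/√2}` of the paper. -/
noncomputable def Nc (Λ : ℝ) : ℂ :=
  (((2 : ℝ) ^ ((1 : ℝ) / 4) * Real.exp (Λ / Real.sqrt 2) : ℝ) : ℂ)

/-- `L₊(x) = N e^{(1-i)x/√2}` for `x < -Λ`, and `0` beyond the junction. -/
noncomputable def Lp (Λ : ℝ) (x : ℝ) : ℂ :=
  if x < -Λ then Nc Λ * Complex.exp ((1 - Complex.I) * x / Real.sqrt 2) else 0

/-- `L₋(x) = N e^{(1+i)x/√2}` for `x < -Λ`, and `0` beyond the junction. -/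
noncomputable def Lm (Λ : ℝ) (x : ℝ) : ℂ :=
  if x < -Λ then Nc Λ * Complex.exp ((1 + Complex.I) * x / Real.sqrt 2) else 0

/-- `R₊(x) = N e^{(-1+i)x/√2}` for `x > Λ`, and `0` beyond the junction. -/
noncomputable def Rp (Λ : ℝ) (x : ℝ) : ℂ :=
  if Λ < x then Nc Λ * Complex.exp ((-1 + Complex.I) * x / Real.sqrt 2) else 0

/-- `R₋(x) = N e^{(-1-i)x/√2}` for `x > Λ`, and `0` beyond the junction. -/
noncomputable def Rm (Λ : ℝ) (x : ℝ) : ℂ :=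
  if Λ < x then Nc Λ * Complex.exp ((-1 - Complex.I) * x / Real.sqrt 2) else 0

/-- One-sided boundary value `L₊(-Λ) = N e^{-(1-i)Λ/√2}`. -/
noncomputable def LpB (Λ : ℝ) : ℂ := Nc Λ * Complex.exp (-((1 - Complex.I) * Λ) / Real.sqrt 2)

/-- One-sided boundary value `L₋(-Λ) = N e^{-(1+i)Λ/√2}`. -/
noncomputable def LmB (Λ : ℝ) : ℂ := Nc Λ * Complex.exp (-((1 + Complex.I) * Λ) / Real.sqrt 2)

/-- One-sided boundary value `R₊(Λ) = N e^{(-1+i)Λ/√2}`. -/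
noncomputable def RpB (Λ : ℝ) : ℂ := Nc Λ * Complex.exp ((-1 + Complex.I) * Λ / Real.sqrt 2)

/-- One-sided boundary value `R₋(Λ) = N e^{(-1-i)Λ/√2}`. -/
noncomputable def RmB (Λ : ℝ) : ℂ := Nc Λ * Complex.exp ((-1 - Complex.I) * Λ / Real.sqrt 2)

/-! On each half-line of `Ω_Λ` the equation `-ψ'' = ±iψ` reads `ψ'' = μ²ψ`, where
`μ = (1 ∓ i)/√2` is the square root of `∓i` with positive real part. Its solutions there are
`A e^{μx} + B e^{-μx}`, since the Wronskians of `ψ` with `e^{-μx}` and with `e^{μx}` are constant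
and recover `ψ`. Because `Re μ > 0`, square integrability near `-∞` forces `B = 0` and near `+∞`
forces `A = 0`, so `ψ` is a multiple of `e^{μx}` on the left and of `e^{-μx}` on the right. -/

open Set Filter Topology

section ExponentialSolutions

variable {ψ : ℝ → ℂ} {μ : ℂ}

theorem hasDerivAt_cexp_mul_ofReal (c : ℂ) (x : ℝ) :
    HasDerivAt (fun y : ℝ => Complex.exp (c * y)) (c * Complex.exp (c * x)) x := by
  simpa [mul_comm] using (((hasDerivAt_id x).ofReal_comp).const_mul c).cexp

/-- The Wronskian `W(e^{-ν·}, ψ)`: it is constant when `ψ'' = ν² ψ`, because `e^{-ν·}` solves the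
same equation. -/
noncomputable def wronskianExp (ψ : ℝ → ℂ) (ν : ℂ) (y : ℝ) : ℂ :=
  (deriv ψ y + ν * ψ y) * Complex.exp (-ν * y)

theorem hasDerivAt_wronskianExp {ν : ℂ} {x : ℝ} (hψ : DifferentiableAt ℝ ψ x)
    (hψ' : DifferentiableAt ℝ (deriv ψ) x) (hode : deriv (deriv ψ) x = ν ^ 2 * ψ x) :
    HasDerivAt (wronskianExp ψ ν) 0 x := by
  have h := (hψ'.hasDerivAt.add (hψ.hasDerivAt.const_mul ν)).mul (hasDerivAt_cexp_mul_ofReal (-ν) x)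
  rw [hode] at h
  exact h.congr_deriv (by simp only [Pi.add_apply]; ring)

theorem wronskianExp_mul_sub (x : ℝ) :
    wronskianExp ψ μ x * Complex.exp (μ * x) - wronskianExp ψ (-μ) x * Complex.exp (-μ * x) =
      2 * μ * ψ x := by
  have h₁ : Complex.exp (-μ * x) * Complex.exp (μ * x) = 1 := by
    rw [← Complex.exp_add]; simp
  have h₂ : Complex.exp (- -μ * x) * Complex.exp (-μ * x) = 1 := by
    rw [← Complex.exp_add]; simp
  unfold wronskianExp
  linear_combination (deriv ψ x + μ * ψ x) * h₁ - (deriv ψ x - μ * ψ x) * h₂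

theorem exists_eq_mul_cexp_add_mul_cexp {s : Set ℝ} (hs : IsOpen s) (hs' : IsPreconnected s) (hμ : μ ≠ 0)
    (hdiff : ∀ x ∈ s, DifferentiableAt ℝ ψ x ∧ DifferentiableAt ℝ (deriv ψ) x)
    (hode : ∀ x ∈ s, deriv (deriv ψ) x = μ ^ 2 * ψ x) :
    ∃ A B : ℂ, ∀ x ∈ s, ψ x = A * Complex.exp (μ * x) + B * Complex.exp (-μ * x) := by
  have hconst : ∀ ν : ℂ, ν ^ 2 = μ ^ 2 → ∃ c, ∀ x ∈ s, wronskianExp ψ ν x = c := fun ν hν =>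
    hs.exists_is_const_of_deriv_eq_zero hs'
      (fun x hx => (hasDerivAt_wronskianExp (hdiff x hx).1 (hdiff x hx).2
        (hν ▸ hode x hx)).differentiableAt.differentiableWithinAt)
      (fun x hx => (hasDerivAt_wronskianExp (hdiff x hx).1 (hdiff x hx).2
        (hν ▸ hode x hx)).deriv)
  obtain ⟨cp, hcp⟩ := hconst μ rfl
  obtain ⟨cm, hcm⟩ := hconst (-μ) (neg_sq μ)
  refine ⟨cp / (2 * μ), -cm / (2 * μ), fun x hx => ?_⟩
  have h := wronskianExp_mul_sub (ψ := ψ) (μ := μ) x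
  rw [hcp x hx, hcm x hx, neg_mul] at h
  field_simp
  linear_combination -h

end ExponentialSolutions

section SquareIntegrability

open MeasureTheory

variable {ψ : ℝ → ℂ} {μ A B : ℂ}

theorem not_integrableOn_Ioi_of_tendsto_atTop {f : ℝ → ℝ} (hf : Tendsto f atTop atTop) (a : ℝ) :
    ¬ IntegrableOn f (Ioi a) := by
  intro hint
  obtain ⟨M, hM⟩ := (hf.eventually_ge_atTop 1).exists_forall_of_atTop
  have hsub : Ioi (max a M) ⊆ {x | 1 ≤ f x} := fun x hx => hM x (le_max_right a M |>.trans hx.le)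
  have hfin := ((hint.mono_set (Ioi_subset_Ioi (le_max_left a M))).measure_ge_lt_top one_pos)
  refine hfin.ne (top_le_iff.mp ?_)
  calc ⊤ = volume (Ioi (max a M)) := Real.volume_Ioi.symm
    _ = volume.restrict (Ioi (max a M)) (Ioi (max a M)) := (Measure.restrict_apply_self _ _).symm
    _ ≤ volume.restrict (Ioi (max a M)) {x | 1 ≤ f x} := measure_mono hsub

theorem tendsto_norm_mul_cexp_add_mul_cexp_atTop (hμ : 0 < μ.re) (hA : A ≠ 0) :
    Tendsto (fun x : ℝ => ‖A * Complex.exp (μ * x) + B * Complex.exp (-μ * x)‖) atTop atTop := by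
  have hlin : Tendsto (fun x : ℝ => μ.re * x) atTop atTop := tendsto_id.const_mul_atTop hμ
  have hgrow : Tendsto (fun x : ℝ => ‖A‖ * Real.exp (μ.re * x)) atTop atTop :=
    (Real.tendsto_exp_atTop.comp hlin).const_mul_atTop (norm_pos_iff.mpr hA)
  have hdecay : Tendsto (fun x : ℝ => ‖B‖ * Real.exp (-(μ.re * x))) atTop (𝓝 0) := by
    simpa using (Real.tendsto_exp_atBot.comp (tendsto_neg_atTop_atBot.comp hlin)).const_mul ‖B‖
  refine tendsto_atTop_mono (fun x => ?_) (hgrow.atTop_add hdecay.neg)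
  calc ‖A‖ * Real.exp (μ.re * x) + -(‖B‖ * Real.exp (-(μ.re * x)))
      = ‖A * Complex.exp (μ * x)‖ - ‖-(B * Complex.exp (-μ * x))‖ := by
        simp [Complex.norm_exp, sub_eq_add_neg]
    _ ≤ ‖A * Complex.exp (μ * x) + B * Complex.exp (-μ * x)‖ := by
        simpa using norm_sub_norm_le (A * Complex.exp (μ * x)) (-(B * Complex.exp (-μ * x)))

theorem eq_zero_of_integrableOn_Ioi {a : ℝ} (hμ : 0 < μ.re)
    (hL2 : IntegrableOn (fun x => ‖ψ x‖ ^ 2) (Ioi a))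
    (hψ : ∀ x ∈ Ioi a, ψ x = A * Complex.exp (μ * x) + B * Complex.exp (-μ * x)) : A = 0 := by
  by_contra hA
  refine not_integrableOn_Ioi_of_tendsto_atTop ?_ a hL2
  refine ((tendsto_pow_atTop two_ne_zero).comp
    (tendsto_norm_mul_cexp_add_mul_cexp_atTop (B := B) hμ hA)).congr' ?_
  filter_upwards [Ioi_mem_atTop a] with x hx
  simp [hψ x hx]

theorem eq_zero_of_integrableOn_Iio {a : ℝ} (hμ : 0 < μ.re)
    (hL2 : IntegrableOn (fun x => ‖ψ x‖ ^ 2) (Iio a))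
    (hψ : ∀ x ∈ Iio a, ψ x = A * Complex.exp (μ * x) + B * Complex.exp (-μ * x)) : B = 0 := by
  refine eq_zero_of_integrableOn_Ioi (ψ := fun x => ψ (-x)) (a := -a) (B := A) hμ
    (IntegrableOn.comp_neg_Ioi (f := fun x => ‖ψ x‖ ^ 2) (by rwa [neg_neg])) fun x hx => ?_
  rw [hψ (-x) (show -x < a from neg_lt.mp hx)]
  push_cast
  ring_nf

theorem exists_eq_mul_add_mul_of_sq_integrable {Λ : ℝ} (hΛ : 0 ≤ Λ) (hμ : 0 < μ.re) {N : ℂ}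
    (hN : N ≠ 0) {L R : ℝ → ℂ} (hL : L = fun x => if x < -Λ then N * Complex.exp (μ * x) else 0)
    (hR : R = fun x => if Λ < x then N * Complex.exp (-μ * x) else 0)
    (hdiff : ∀ x ∈ Iio (-Λ) ∪ Ioi Λ, DifferentiableAt ℝ ψ x ∧ DifferentiableAt ℝ (deriv ψ) x)
    (hL2 : IntegrableOn (fun x => ‖ψ x‖ ^ 2) (Iio (-Λ) ∪ Ioi Λ))
    (hode : ∀ x ∈ Iio (-Λ) ∪ Ioi Λ, deriv (deriv ψ) x = μ ^ 2 * ψ x) :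
    ∃ cL cR : ℂ, ∀ x ∈ Iio (-Λ) ∪ Ioi Λ, ψ x = cL * L x + cR * R x := by
  have hμ0 : μ ≠ 0 := fun h => by simp [h] at hμ
  obtain ⟨A, B, hleft⟩ := exists_eq_mul_cexp_add_mul_cexp isOpen_Iio isPreconnected_Iio hμ0
    (fun x hx => hdiff x (.inl hx)) (fun x hx => hode x (.inl hx))
  obtain ⟨A', B', hright⟩ := exists_eq_mul_cexp_add_mul_cexp isOpen_Ioi isPreconnected_Ioi hμ0
    (fun x hx => hdiff x (.inr hx)) (fun x hx => hode x (.inr hx))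
  have hB : B = 0 := eq_zero_of_integrableOn_Iio hμ (hL2.mono_set subset_union_left) hleft
  have hA' : A' = 0 := eq_zero_of_integrableOn_Ioi hμ (hL2.mono_set subset_union_right) hright
  refine ⟨A / N, B' / N, ?_⟩
  rintro x (hx | hx)
  · have hx' : ¬ Λ < x := fun h => by simp only [mem_Iio] at hx; linarith
    simp only [hL, hR, if_pos (show x < -Λ from hx), if_neg hx', hleft x hx, hB]
    field_simp
    ring
  · have hx' : ¬ x < -Λ := fun h => by simp only [mem_Ioi] at hx; linarith
    simp only [hL, hR, if_pos (show Λ < x from hx), if_neg hx', hright x hx, hA']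
    field_simp
    ring

end SquareIntegrability

theorem Nc_ne_zero (Λ : ℝ) : Nc Λ ≠ 0 := by
  unfold Nc
  exact_mod_cast (by positivity)

theorem ofReal_sqrt_two_sq : ((√2 : ℝ) : ℂ) ^ 2 = 2 := by
  norm_cast
  simp

/-- The deficiency subspaces are spanned by `L₊, R₊` (eigenvalue `i`) and by
`L₋, R₋` (eigenvalue `-i`): any `ψ` twice differentiable on
`Ω_Λ = (-∞,-Λ) ∪ (Λ,∞)`, square integrable on `Ω_Λ`, and satisfying
`-ψ'' = ±iψ` on `Ω_Λ` is a linear combination of `L±, R±` on `Ω_Λ`. -/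
theorem stmt10 (Λ : ℝ) (hΛ : 0 < Λ) (ψ : ℝ → ℂ)
    (hdiff : ∀ x ∈ Set.Iio (-Λ) ∪ Set.Ioi Λ,
      DifferentiableAt ℝ ψ x ∧ DifferentiableAt ℝ (deriv ψ) x)
    (hL2 : MeasureTheory.IntegrableOn (fun x => ‖ψ x‖ ^ 2)
      (Set.Iio (-Λ) ∪ Set.Ioi Λ)) :
    ((∀ x ∈ Set.Iio (-Λ) ∪ Set.Ioi Λ, -(deriv (deriv ψ) x) = Complex.I * ψ x) →
      ∃ cL cR : ℂ, ∀ x ∈ Set.Iio (-Λ) ∪ Set.Ioi Λ,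
        ψ x = cL * Lp Λ x + cR * Rp Λ x) ∧
    ((∀ x ∈ Set.Iio (-Λ) ∪ Set.Ioi Λ, -(deriv (deriv ψ) x) = -Complex.I * ψ x) →
      ∃ cL cR : ℂ, ∀ x ∈ Set.Iio (-Λ) ∪ Set.Ioi Λ,
        ψ x = cL * Lm Λ x + cR * Rm Λ x) := by
  have hsqrt : (0 : ℝ) < √2 := by positivity
  constructor
  · intro hode
    have hsq : ((1 - Complex.I) / (√2 : ℝ)) ^ 2 = -Complex.I := by
      rw [div_pow, ofReal_sqrt_two_sq]
      linear_combination Complex.I_sq / 2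
    refine exists_eq_mul_add_mul_of_sq_integrable (μ := (1 - Complex.I) / (√2 : ℝ)) hΛ.le
      (by simp [Complex.div_ofReal_re, hsqrt]) (Nc_ne_zero Λ) ?_ ?_ hdiff hL2
      fun x hx => by linear_combination -hode x hx - ψ x * hsq
    · funext x; simp only [Lp]; ring_nf
    · funext x; simp only [Rp]; ring_nf
  · intro hode
    have hsq : ((1 + Complex.I) / (√2 : ℝ)) ^ 2 = Complex.I := by
      rw [div_pow, ofReal_sqrt_two_sq]
      linear_combination Complex.I_sq / 2
    refine exists_eq_mul_add_mul_of_sq_integrable (μ := (1 + Complex.I) / (√2 : ℝ)) hΛ.le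
      (by simp [Complex.div_ofReal_re, hsqrt]) (Nc_ne_zero Λ) ?_ ?_ hdiff hL2
      fun x hx => by linear_combination -hode x hx - ψ x * hsq
    · funext x; simp only [Lm]; ring_nf
    · funext x; simp only [Rm]; ring_nf
end
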